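/- arXiv:2301.11695 — 2 statements merged into one kernel-verified Lean document; each statement's English description precedes it below -/
import Mathlib

section
/- Let C ≥ 2 and let ℓ : Δ^{C−1} → ℝ^C be a proper loss such that ℓ ∘ Π^{-1} is differentiable on the interior of Δ̃^{C−1}. Write ℓ_{−C} for the vector of the first C−1 partial losses and ℓ_C for the last partial loss. Then for every p̃ in the interior of Δ̃^{C−1}, writing p_C = 1 − Σ_{i=1}^{C−1} p̃_i, the Jacobians satisfy p̃^T J_{ℓ_{−C} ∘ Π^{-1}}(p̃) + p_C J_{ℓ_C ∘ Π^{-1}}(p̃) = 0, i.e., J_{ℓ_C ∘ Π^{-1}}(p̃) = −(p̃^T / p_C) J_{ℓ_{−C} ∘ Π^{-1}}(p̃). -/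
noncomputable section

/-- The probability simplex `Δ^C ⊆ ℝ^{d+1}` (here `C = d+1`). -/
def simplex (n : ℕ) : Set (Fin n → ℝ) :=
  {p | (∀ i, 0 ≤ p i) ∧ ∑ i, p i = 1}

/-- The interior of the projected probability simplex `Δ̃^{C-1} ⊆ ℝ^{C-1}` (here `C-1 = d`). -/
def projInterior (d : ℕ) : Set (Fin d → ℝ) :=
  {p | (∀ i, 0 < p i) ∧ ∑ i, p i < 1}

/-- The inverse projection `Π⁻¹ : Δ̃^{C-1} → Δ^{C-1}`,
`pt ↦ (pt₁, …, pt_{C-1}, 1 - ∑ i, pt i)`. -/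
def piInv (d : ℕ) (p : Fin d → ℝ) : Fin (d + 1) → ℝ :=
  Fin.snoc p (1 - ∑ i, p i)

/-- The conditional risk `L(p,q) = ∑ i, p i * ℓ_i(q)` of a loss `ℓ`. -/
def condRisk {n : ℕ} (ℓ : (Fin n → ℝ) → (Fin n → ℝ)) (p q : Fin n → ℝ) : ℝ :=
  ∑ i, p i * ℓ q i

/-- A loss is proper if `L(p,p) ≤ L(p,q)` on the simplex. -/
def Proper {n : ℕ} (ℓ : (Fin n → ℝ) → (Fin n → ℝ)) : Prop :=
  ∀ p ∈ simplex n, ∀ q ∈ simplex n, condRisk ℓ p p ≤ condRisk ℓ p q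

/-- The composition `ℓ ∘ Π⁻¹ : ℝ^{C-1} → ℝ^C`. -/
def lossComp (d : ℕ) (ℓ : (Fin (d + 1) → ℝ) → (Fin (d + 1) → ℝ)) :
    (Fin d → ℝ) → (Fin (d + 1) → ℝ) :=
  fun x => ℓ (piInv d x)

/-- The projected conditional Bayes risk `L̲̃(pt) = L(Π⁻¹ pt, Π⁻¹ pt)`. -/
def projBayes (d : ℕ) (ℓ : (Fin (d + 1) → ℝ) → (Fin (d + 1) → ℝ)) :
    (Fin d → ℝ) → ℝ :=
  fun x => condRisk ℓ (piInv d x) (piInv d x)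

/-- The gradient `∇L̲̃` of the projected conditional Bayes risk. -/
def gradPB (d : ℕ) (ℓ : (Fin (d + 1) → ℝ) → (Fin (d + 1) → ℝ)) :
    (Fin d → ℝ) → (Fin d → ℝ) :=
  fun x i => fderiv ℝ (projBayes d ℓ) x (Pi.single i 1)

/-- The Hessian `H_{L̲̃}(x) i j = ∂_j ∂_i L̲̃ (x)` of the projected conditional Bayes risk. -/
def hessPB (d : ℕ) (ℓ : (Fin (d + 1) → ℝ) → (Fin (d + 1) → ℝ))
    (x : Fin d → ℝ) (i j : Fin d) : ℝ :=
  fderiv ℝ (gradPB d ℓ) x (Pi.single j 1) i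

/-- The canonical link `ψ̃ = -∇L̲̃`. -/
def canLink (d : ℕ) (ℓ : (Fin (d + 1) → ℝ) → (Fin (d + 1) → ℝ)) :
    (Fin d → ℝ) → (Fin d → ℝ) :=
  fun x i => -(gradPB d ℓ x i)

end

/-! For fixed `p` in the interior, properness says that `q ↦ L(Π⁻¹ p, ℓ(Π⁻¹ q))` is minimal at the
interior point `q = p`, so its derivative vanishes there. As `L(Π⁻¹ p, ·)` is linear in the loss
vector with coefficients `(p₁, …, p_{C-1}, p_C)`, that derivative is
`pᵀ J_{ℓ₋C ∘ Π⁻¹}(p) + p_C J_{ℓ_C ∘ Π⁻¹}(p)`. -/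

theorem IsLocalMin.sum_mul_fderiv_eq_zero {E ι : Type*} [NormedAddCommGroup E]
    [NormedSpace ℝ E] [Fintype ι] {g : E → ι → ℝ} {x : E} (c : ι → ℝ)
    (hg : DifferentiableAt ℝ g x) (hmin : IsLocalMin (fun y => ∑ i, c i * g y i) x) (v : E) :
    ∑ i, c i * fderiv ℝ g x v i = 0 := by
  let L : (ι → ℝ) →L[ℝ] ℝ := ∑ i, c i • ContinuousLinearMap.proj i
  have hLg : L ∘ g = fun y => ∑ i, c i * g y i := by
    funext y
    simp [L]
  have hL : HasFDerivAt (L ∘ g) (L.comp (fderiv ℝ g x)) x :=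
    L.hasFDerivAt.comp x hg.hasFDerivAt
  rw [hLg] at hL
  simpa [L] using congrArg (· v) (hmin.hasFDerivAt_eq_zero hL)

theorem isOpen_projInterior (d : ℕ) : IsOpen (projInterior d) := by
  have h : projInterior d = (⋂ i, {p : Fin d → ℝ | 0 < p i}) ∩ {p | ∑ i, p i < 1} := by
    ext p; simp [projInterior]
  rw [h]
  exact (isOpen_iInter_of_finite fun i => isOpen_lt continuous_const (continuous_apply i)).inter
    (isOpen_lt (by fun_prop) continuous_const)

@[simp]
theorem piInv_castSucc (d : ℕ) (p : Fin d → ℝ) (i : Fin d) : piInv d p i.castSucc = p i := by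
  simp [piInv]

@[simp]
theorem piInv_last (d : ℕ) (p : Fin d → ℝ) : piInv d p (Fin.last d) = 1 - ∑ i, p i := by
  simp [piInv]

theorem piInv_mem_simplex {d : ℕ} {p : Fin d → ℝ} (hp : p ∈ projInterior d) :
    piInv d p ∈ simplex (d + 1) := by
  obtain ⟨hpos, hsum⟩ := hp
  refine ⟨fun i => Fin.lastCases ?_ (fun j => ?_) i, by simp [Fin.sum_univ_castSucc]⟩
  · simp only [piInv_last]; linarith
  · simpa using (hpos j).le

theorem Proper.isLocalMin_sum_mul_lossComp {d : ℕ} {ℓ : (Fin (d + 1) → ℝ) → (Fin (d + 1) → ℝ)}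
    (hℓ : Proper ℓ) {p : Fin d → ℝ} (hp : p ∈ projInterior d) :
    IsLocalMin (fun q => ∑ i, piInv d p i * lossComp d ℓ q i) p := by
  filter_upwards [(isOpen_projInterior d).mem_nhds hp] with q hq
  exact hℓ _ (piInv_mem_simplex hp) _ (piInv_mem_simplex hq)

theorem stmt_4_general (d : ℕ)
    (ℓ : (Fin (d + 1) → ℝ) → (Fin (d + 1) → ℝ)) (hproper : Proper ℓ)
    (hdiff : ∀ pt ∈ projInterior d, DifferentiableAt ℝ (lossComp d ℓ) pt) :
    ∀ pt ∈ projInterior d, ∀ v : Fin d → ℝ,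
      (∑ i : Fin d, pt i * fderiv ℝ (lossComp d ℓ) pt v i.castSucc)
        + (1 - ∑ i, pt i) * fderiv ℝ (lossComp d ℓ) pt v (Fin.last d) = 0 := by
  intro pt hpt v
  have h := (hproper.isLocalMin_sum_mul_lossComp hpt).sum_mul_fderiv_eq_zero _ (hdiff pt hpt) v
  simpa [Fin.sum_univ_castSucc] using h

/-- Stationarity of a differentiable proper loss: for every pt in the interior of the
projected simplex, `ptᵀ J_{ℓ₋C ∘ Π⁻¹}(pt) + p_C J_{ℓ_C ∘ Π⁻¹}(pt) = 0`. -/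
theorem stmt_4 (d : ℕ) (hd : 1 ≤ d)
    (ℓ : (Fin (d + 1) → ℝ) → (Fin (d + 1) → ℝ)) (hproper : Proper ℓ)
    (hdiff : ∀ pt ∈ projInterior d, DifferentiableAt ℝ (lossComp d ℓ) pt) :
    ∀ pt ∈ projInterior d, ∀ v : Fin d → ℝ,
      (∑ i : Fin d, pt i * fderiv ℝ (lossComp d ℓ) pt v i.castSucc)
        + (1 - ∑ i, pt i) * fderiv ℝ (lossComp d ℓ) pt v (Fin.last d) = 0 :=
  stmt_4_general d ℓ hproper hdiff
end

section
/- For C ≥ 2, the function f : ℝ^{C−1} → ℝ defined by f(x) = log(1 + Σ_{k=1}^{C−1} exp(x_k)) (called LogSumExp⁺) is strictly convex on ℝ^{C−1}. -/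
/-!
Normalising by `X = ∑ exp xᵢ` and `Y = ∑ exp yᵢ`, the weighted AM-GM inequality applied termwise
gives Hölder's inequality `∑ exp (a xᵢ + b yᵢ) ≤ X ^ a * Y ^ b`, hence convexity of
`x ↦ log ∑ exp xᵢ`. Equality forces `exp xᵢ / X = exp yᵢ / Y` for every `i`, i.e. `x - y` constant.
LogSumExp⁺ is LogSumExp of `(0, x)`; the pinned coordinate `0` makes `x - y` constant only when
`x = y`, which gives strictness.
-/

open Real Finset

theorem sum_rpow_mul_rpow_lt {ι : Type*} {s : Finset ι} {u v : ι → ℝ} {a b : ℝ}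
    (hu : ∀ i ∈ s, 0 < u i) (hv : ∀ i ∈ s, 0 < v i) (ha : 0 < a) (hb : 0 < b) (hab : a + b = 1)
    (huv : ∃ i ∈ s, u i / ∑ j ∈ s, u j ≠ v i / ∑ j ∈ s, v j) :
    ∑ i ∈ s, u i ^ a * v i ^ b < (∑ i ∈ s, u i) ^ a * (∑ i ∈ s, v i) ^ b := by
  set U := ∑ i ∈ s, u i
  set V := ∑ i ∈ s, v i
  obtain ⟨i₀, hi₀, hne⟩ := huv
  have hU : 0 < U := sum_pos hu ⟨i₀, hi₀⟩
  have hV : 0 < V := sum_pos hv ⟨i₀, hi₀⟩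
  have hterm : ∀ i ∈ s, u i ^ a * v i ^ b = (u i / U) ^ a * (v i / V) ^ b * (U ^ a * V ^ b) := by
    intro i hi
    rw [div_rpow (hu i hi).le hU.le, div_rpow (hv i hi).le hV.le]
    field_simp
  have hweights : ∑ i ∈ s, (a * (u i / U) + b * (v i / V)) = 1 := by
    rw [sum_add_distrib, ← mul_sum, ← mul_sum, ← sum_div, ← sum_div, div_self hU.ne',
      div_self hV.ne', mul_one, mul_one, hab]
  calc ∑ i ∈ s, u i ^ a * v i ^ b
      < ∑ i ∈ s, (a * (u i / U) + b * (v i / V)) * (U ^ a * V ^ b) := by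
        refine sum_lt_sum (fun i hi => ?_) ⟨i₀, hi₀, ?_⟩
        · rw [hterm i hi]
          gcongr
          exact geom_mean_le_arith_mean2_weighted ha.le hb.le (div_pos (hu i hi) hU).le
            (div_pos (hv i hi) hV).le hab
        · rw [hterm i₀ hi₀]
          gcongr
          exact (geom_mean_lt_arith_mean2_weighted_iff_of_pos ha hb (div_pos (hu i₀ hi₀) hU).le
            (div_pos (hv i₀ hi₀) hV).le hab).2 hne
    _ = U ^ a * V ^ b := by rw [← sum_mul, hweights, one_mul]

theorem log_sum_exp_smul_add_smul_lt {ι : Type*} [Fintype ι] {x y : ι → ℝ} {a b : ℝ}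
    (ha : 0 < a) (hb : 0 < b) (hab : a + b = 1) (hxy : ∃ i j, x i - y i ≠ x j - y j) :
    log (∑ i, exp ((a • x + b • y) i)) < a * log (∑ i, exp (x i)) + b * log (∑ i, exp (y i)) := by
  obtain ⟨i₀, j₀, hne⟩ := hxy
  set X := ∑ i, exp (x i)
  set Y := ∑ i, exp (y i)
  have hX : 0 < X := sum_pos (fun i _ => exp_pos _) ⟨i₀, mem_univ _⟩
  have hY : 0 < Y := sum_pos (fun i _ => exp_pos _) ⟨i₀, mem_univ _⟩
  have hexp : ∀ i, exp ((a • x + b • y) i) = exp (x i) ^ a * exp (y i) ^ b := by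
    intro i
    rw [← exp_mul, ← exp_mul, ← exp_add]
    simp [mul_comm]
  have hholder : ∑ i, exp ((a • x + b • y) i) < X ^ a * Y ^ b := by
    simp only [hexp]
    refine sum_rpow_mul_rpow_lt (fun i _ => exp_pos _) (fun i _ => exp_pos _) ha hb hab ?_
    by_contra! hprop
    have hshift : ∀ i, x i - y i = log X - log Y := by
      intro i
      have := congrArg log (hprop i (mem_univ i))
      rw [log_div (exp_ne_zero _) hX.ne', log_div (exp_ne_zero _) hY.ne', log_exp, log_exp] at this
      linarith
    exact hne (by rw [hshift i₀, hshift j₀])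
  calc log (∑ i, exp ((a • x + b • y) i))
      < log (X ^ a * Y ^ b) := log_lt_log (sum_pos (fun i _ => exp_pos _) ⟨i₀, mem_univ _⟩) hholder
    _ = a * log X + b * log Y := by
      rw [log_mul (by positivity) (by positivity), log_rpow hX, log_rpow hY]

theorem stmt_11_general (d : ℕ) :
    StrictConvexOn ℝ (Set.univ : Set (Fin d → ℝ))
      (fun x => Real.log (1 + ∑ k, Real.exp (x k))) := by
  let padZero (z : Fin d → ℝ) (o : Option (Fin d)) : ℝ := o.elim 0 z
  have hsum (z : Fin d → ℝ) : 1 + ∑ k, exp (z k) = ∑ o, exp (padZero z o) := by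
    simp [padZero, Fintype.sum_option]
  have hpad (x y : Fin d → ℝ) (a b : ℝ) :
      padZero (a • x + b • y) = a • padZero x + b • padZero y := by
    ext (_ | k) <;> simp [padZero]
  refine ⟨convex_univ, fun x _ y _ hxy a b ha hb hab => ?_⟩
  obtain ⟨k, hk⟩ := Function.ne_iff.1 hxy
  have := log_sum_exp_smul_add_smul_lt (x := padZero x) (y := padZero y) ha hb hab
    ⟨some k, none, by simpa [padZero, sub_eq_zero] using hk⟩
  simpa only [hsum, hpad, smul_eq_mul] using this

/-- The function `LogSumExp⁺ : ℝ^{C-1} → ℝ`, `x ↦ log (1 + ∑ k, exp (x k))`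
(here `C - 1 = d` with `C ≥ 2`), is strictly convex. -/
theorem stmt_11 (d : ℕ) (hd : 1 ≤ d) :
    StrictConvexOn ℝ (Set.univ : Set (Fin d → ℝ))
      (fun x => Real.log (1 + ∑ k, Real.exp (x k))) :=
  stmt_11_general d
end
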